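/- Let m ≥ 1 and let A ⊆ ℤ_m be non-empty with |A| = n, with distinct canonical representatives a_1 < a_2 < … < a_n in {0, 1, …, m-1}, extended cyclically by a_{n+j} := a_j for 1 ≤ j ≤ n. Say that there is a match at position i (for 1 ≤ i ≤ n) if for all 1 ≤ j ≤ n one has (a_{j+1} - a_j) mod m = (a_{i+j} - a_{i+j-1}) mod m. Then Sym(A) = {(a_i - a_1) mod m : 1 ≤ i ≤ n and there is a match at position i}, where elements of Sym(A) are identified with their canonical representatives. In particular, there is a match at position i if and only if (a_i - a_1) mod m is an element of Sym(A). -/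

import Mathlib

/-!
A symmetry `h` of `A` translates `A` onto itself, so it commutes with the cyclic successor map
of `A` (the next element of `A` going up mod `m`), which on the enumeration is `a j ↦ a (j + 1)`.
Hence if `a 1 + h = a i`, then `a j + h = a (i + j - 1)` for all `j`, and the gaps
`a (j + 1) - a j` are reproduced from position `i` on: a match. Conversely a match at `i`
telescopes to `a j + (a i - a 1) = a (i + j - 1) ∈ A`, so `A + {a i - a 1} ⊆ A`, and both sets
have the same size.
-/

open Pointwise

attribute [local instance] Classical.propDecidable

def symGroup {m : ℕ} [NeZero m] (A : Finset (ZMod m)) : Finset (ZMod m) :=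
  Finset.univ.filter (fun h => A + {h} = A)

open Finset

lemma mem_symGroup {m : ℕ} [NeZero m] {A : Finset (ZMod m)} {h : ZMod m} :
    h ∈ symGroup A ↔ A + {h} = A := by
  simp [symGroup]

namespace ZMod

variable {m : ℕ} [NeZero m]

lemma val_sub_add_val_eq_or (x y : ZMod m) :
    (x - y).val + y.val = x.val ∨ (x - y).val + y.val = x.val + m := by
  rcases lt_or_ge ((x - y).val + y.val) m with h | h
  · left
    rw [← val_add_of_lt h, sub_add_cancel]
  · right
    rw [val_add_val_of_le h, sub_add_cancel]

/-- `y` lies in the cyclic interval `(x, z]`, in one of its three rotations. -/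
lemma val_sub_sub_one_le_of_cyclic {x y z : ZMod m}
    (h : x.val < y.val ∧ y.val ≤ z.val ∨ z.val ≤ x.val ∧ x.val < y.val ∨
      y.val ≤ z.val ∧ z.val ≤ x.val) :
    (y - x - 1).val ≤ (z - x - 1).val := by
  have : (1 : ZMod m).val = 1 ∨ m = 1 := (eq_or_ne m 1).symm.imp val_one'' id
  have := val_sub_add_val_eq_or y x
  have := val_sub_add_val_eq_or z x
  have := val_sub_add_val_eq_or (y - x) 1
  have := val_sub_add_val_eq_or (z - x) 1
  have := val_lt (y - x - 1)
  have := val_lt (z - x - 1)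
  have := val_lt (y - x)
  have := val_lt (z - x)
  have := val_lt x
  have := val_lt y
  have := val_lt z
  omega

end ZMod

section CyclicSucc

variable {m : ℕ}

/-- `y` follows `x` in `A` cyclically: it is the first element of `A` met when going up mod `m`
from `x + 1`, so `y = x` only if `x` is the sole element of `A`. -/
def IsCyclicSucc (A : Finset (ZMod m)) (x y : ZMod m) : Prop :=
  y ∈ A ∧ ∀ z ∈ A, (y - x - 1).val ≤ (z - x - 1).val

lemma IsCyclicSucc.unique [NeZero m] {A : Finset (ZMod m)} {x y y' : ZMod m}
    (hy : IsCyclicSucc A x y) (hy' : IsCyclicSucc A x y') : y = y' := by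
  have := ZMod.val_injective m (le_antisymm (hy.2 y' hy'.1) (hy'.2 y hy.1))
  simpa using this

lemma IsCyclicSucc.add_right {A : Finset (ZMod m)} {x y : ZMod m} (hy : IsCyclicSucc A x y)
    (c : ZMod m) : IsCyclicSucc (A + {c}) (x + c) (y + c) := by
  refine ⟨add_mem_add hy.1 (mem_singleton_self c), ?_⟩
  rintro _ hz
  obtain ⟨w, hw, d, hd, rfl⟩ := mem_add.mp hz
  rw [mem_singleton.mp hd]
  simpa only [add_sub_add_right_eq_sub] using hy.2 w hw

end CyclicSucc

def MatchesAt {G : Type*} [Sub G] (n : ℕ) (b : ℕ → G) (i : ℕ) : Prop :=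
  ∀ j ∈ Icc 1 n, b (j + 1) - b j = b (i + j) - b (i + j - 1)

lemma matchesAt_iff {G : Type*} [AddCommGroup G] {n : ℕ} {b : ℕ → G} {i : ℕ} :
    MatchesAt n b i ↔ ∀ j ∈ Icc 1 (n + 1), b j + (b i - b 1) = b (i + j - 1) := by
  constructor
  · intro hm j hj
    induction j with
    | zero => simp at hj
    | succ j ih =>
      rcases Nat.eq_zero_or_pos j with rfl | hj0
      · simp
      · have hj' : j ∈ Icc 1 n := by simp only [mem_Icc] at hj ⊢; omega
        calc b (j + 1) + (b i - b 1) = (b (j + 1) - b j) + (b j + (b i - b 1)) := by abel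
          _ = b (i + (j + 1) - 1) := by
            rw [hm j hj', ih (by simp only [mem_Icc] at hj ⊢; omega),
              show i + (j + 1) - 1 = i + j by omega]
            abel
  · intro hs j hj
    simp only [mem_Icc] at hj
    have hj1 := hs j (by simp only [mem_Icc]; omega)
    have hj2 := hs (j + 1) (by simp only [mem_Icc]; omega)
    rw [show i + (j + 1) - 1 = i + j by omega] at hj2
    rw [← hj1, ← hj2]
    abel

structure IsCyclicEnumeration {m : ℕ} (A : Finset (ZMod m)) (n : ℕ)
    (a : ℕ → ZMod m) : Prop where
  val_lt : ∀ i ∈ Icc 1 n, ∀ j ∈ Icc 1 n, i < j → (a i).val < (a j).val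
  eq_image : A = (Icc 1 n).image a
  periodic : ∀ j ∈ Icc 1 n, a (n + j) = a j

namespace IsCyclicEnumeration

variable {m n : ℕ} {A : Finset (ZMod m)} {a : ℕ → ZMod m}

lemma val_le (hE : IsCyclicEnumeration A n a) {i j : ℕ} (hi : i ∈ Icc 1 n) (hj : j ∈ Icc 1 n)
    (hij : i ≤ j) : (a i).val ≤ (a j).val := by
  rcases hij.lt_or_eq with hij | rfl
  · exact (hE.val_lt i hi j hj hij).le
  · rfl

lemma exists_eq_of_mem (hE : IsCyclicEnumeration A n a) {x : ZMod m} (hx : x ∈ A) :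
    ∃ i ∈ Icc 1 n, a i = x := by
  rw [hE.eq_image] at hx
  simpa using hx

lemma apply_mem (hE : IsCyclicEnumeration A n a) {k : ℕ} (hk1 : 1 ≤ k) (hk2 : k ≤ 2 * n) :
    a k ∈ A := by
  rw [hE.eq_image]
  rcases le_or_gt k n with hkn | hkn
  · exact mem_image_of_mem a (mem_Icc.mpr ⟨hk1, hkn⟩)
  · obtain ⟨l, rfl⟩ : ∃ l, k = n + l := ⟨k - n, by omega⟩
    have hl : l ∈ Icc 1 n := mem_Icc.mpr ⟨by omega, by omega⟩
    rw [hE.periodic l hl]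
    exact mem_image_of_mem a hl

lemma isCyclicSucc_of_le [NeZero m] (hE : IsCyclicEnumeration A n a) {k : ℕ} (hk1 : 1 ≤ k)
    (hkn : k ≤ n) : IsCyclicSucc A (a k) (a (k + 1)) := by
  have hk : k ∈ Icc 1 n := mem_Icc.mpr ⟨hk1, hkn⟩
  refine ⟨hE.apply_mem (by omega) (by omega), ?_⟩
  rw [hE.eq_image, forall_mem_image]
  intro l hl
  apply ZMod.val_sub_sub_one_le_of_cyclic
  rcases hkn.lt_or_eq with hkn | rfl
  · have hk' : k + 1 ∈ Icc 1 n := mem_Icc.mpr ⟨by omega, hkn⟩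
    have hsucc := hE.val_lt k hk (k + 1) hk' (by omega)
    rcases le_or_gt l k with hlk | hlk
    · exact .inr (.inl ⟨hE.val_le hl hk hlk, hsucc⟩)
    · exact .inl ⟨hsucc, hE.val_le hk' hl hlk⟩
  · have h1 : 1 ∈ Icc 1 k := mem_Icc.mpr ⟨le_rfl, hk1⟩
    rw [hE.periodic 1 h1]
    exact .inr (.inr ⟨hE.val_le h1 hl (mem_Icc.mp hl).1, hE.val_le hl hk (mem_Icc.mp hl).2⟩)

lemma isCyclicSucc [NeZero m] (hE : IsCyclicEnumeration A n a) {k : ℕ} (hk1 : 1 ≤ k)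
    (hk2 : k < 2 * n) : IsCyclicSucc A (a k) (a (k + 1)) := by
  rcases le_or_gt k n with hkn | hkn
  · exact hE.isCyclicSucc_of_le hk1 hkn
  · obtain ⟨l, rfl⟩ : ∃ l, k = n + l := ⟨k - n, by omega⟩
    rw [add_assoc, hE.periodic l (mem_Icc.mpr ⟨by omega, by omega⟩),
      hE.periodic (l + 1) (mem_Icc.mpr ⟨by omega, by omega⟩)]
    exact hE.isCyclicSucc_of_le (by omega) (by omega)

lemma add_singleton_eq_of_matchesAt (hE : IsCyclicEnumeration A n a) {i : ℕ} (hi : i ∈ Icc 1 n)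
    (hm : MatchesAt n a i) : A + {a i - a 1} = A := by
  rw [matchesAt_iff] at hm
  refine eq_of_subset_of_card_le (fun x hx ↦ ?_) (card_add_singleton _ _).ge
  obtain ⟨y, hy, d, hd, rfl⟩ := mem_add.mp hx
  obtain ⟨j, hj, rfl⟩ := hE.exists_eq_of_mem hy
  simp only [mem_Icc] at hi hj
  rw [mem_singleton.mp hd, hm j (mem_Icc.mpr ⟨hj.1, by omega⟩)]
  exact hE.apply_mem (by omega) (by omega)

lemma matchesAt_of_add_singleton_eq [NeZero m] (hE : IsCyclicEnumeration A n a) {h : ZMod m}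
    (hS : A + {h} = A) {i : ℕ} (hi : i ∈ Icc 1 n) (hai : a 1 + h = a i) : MatchesAt n a i := by
  rw [matchesAt_iff, ← hai, add_sub_cancel_left]
  intro j hj
  simp only [mem_Icc] at hi hj
  induction j with
  | zero => omega
  | succ j ih =>
    rcases Nat.eq_zero_or_pos j with rfl | hj0
    · simpa using hai
    · have hsucc := (hE.isCyclicSucc hj0 (by omega)).add_right h
      rw [hS, ih ⟨hj0, by omega⟩] at hsucc
      rw [hsucc.unique (hE.isCyclicSucc (k := i + j - 1) (by omega) (by omega))]
      congr 1
      omega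

end IsCyclicEnumeration

theorem symGroup_eq_matches_general (m n : ℕ) [NeZero m] (A : Finset (ZMod m)) (hA : A.Nonempty)
    (a : ℕ → ZMod m)
    (ha_mono : ∀ i ∈ Finset.Icc 1 n, ∀ j ∈ Finset.Icc 1 n, i < j → (a i).val < (a j).val)
    (ha_enum : A = (Finset.Icc 1 n).image a)
    (ha_cyc : ∀ j ∈ Finset.Icc 1 n, a (n + j) = a j) :
    symGroup A =
      ((Finset.Icc 1 n).filter
          (fun i => ∀ j ∈ Finset.Icc 1 n, a (j + 1) - a j = a (i + j) - a (i + j - 1))).image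
        (fun i => a i - a 1) ∧
    ∀ i ∈ Finset.Icc 1 n,
      ((∀ j ∈ Finset.Icc 1 n, a (j + 1) - a j = a (i + j) - a (i + j - 1)) ↔
        a i - a 1 ∈ symGroup A) := by
  have hE : IsCyclicEnumeration A n a := ⟨ha_mono, ha_enum, ha_cyc⟩
  have hmatch : ∀ i ∈ Icc 1 n, MatchesAt n a i ↔ a i - a 1 ∈ symGroup A := fun i hi ↦ by
    rw [mem_symGroup]
    exact ⟨hE.add_singleton_eq_of_matchesAt hi,
      fun hS ↦ hE.matchesAt_of_add_singleton_eq hS hi (add_sub_cancel _ _)⟩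
  refine ⟨?_, hmatch⟩
  ext h
  simp only [mem_image, mem_filter]
  constructor
  · intro hh
    have hn : 1 ≤ n := by simpa [ha_enum] using hA
    have h1 : a 1 + h ∈ A := by
      rw [← mem_symGroup.mp hh]
      exact add_mem_add (hE.apply_mem le_rfl (by omega)) (mem_singleton_self h)
    obtain ⟨i, hi, hai⟩ := hE.exists_eq_of_mem h1
    have hh' : a i - a 1 = h := by rw [hai, add_sub_cancel_left]
    exact ⟨i, ⟨hi, (hmatch i hi).2 (hh' ▸ hh)⟩, hh'⟩
  · rintro ⟨i, ⟨hi, hm⟩, rfl⟩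
    exact (hmatch i hi).1 hm

/-- Let `A ⊆ ℤ_m` with `|A| = n`, enumerated as `a 1, …, a n` with strictly increasing
canonical representatives, extended cyclically by `a (n + j) = a j` for `1 ≤ j ≤ n`.
There is a *match at position i* if `a (j+1) - a j = a (i+j) - a (i+j-1)` for all
`1 ≤ j ≤ n`. Then `Sym(A) = {a i - a 1 : 1 ≤ i ≤ n, match at position i}`; in
particular, there is a match at position `i` iff `a i - a 1 ∈ Sym(A)`. -/
theorem symGroup_eq_matches (m n : ℕ) [NeZero m] (A : Finset (ZMod m)) (hA : A.Nonempty)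
    (hcard : A.card = n) (a : ℕ → ZMod m)
    (ha_mono : ∀ i ∈ Finset.Icc 1 n, ∀ j ∈ Finset.Icc 1 n, i < j → (a i).val < (a j).val)
    (ha_enum : A = (Finset.Icc 1 n).image a)
    (ha_cyc : ∀ j ∈ Finset.Icc 1 n, a (n + j) = a j) :
    symGroup A =
      ((Finset.Icc 1 n).filter
          (fun i => ∀ j ∈ Finset.Icc 1 n, a (j + 1) - a j = a (i + j) - a (i + j - 1))).image
        (fun i => a i - a 1) ∧
    ∀ i ∈ Finset.Icc 1 n,
      ((∀ j ∈ Finset.Icc 1 n, a (j + 1) - a j = a (i + j) - a (i + j - 1)) ↔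
        a i - a 1 ∈ symGroup A) :=
  symGroup_eq_matches_general m n A hA a ha_mono ha_enum ha_cyc
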